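/- arXiv:2308.16337 — 4 statements merged into one kernel-verified Lean document; each statement's English description precedes it below -/
import Mathlib

section
/- Let A be an associative unital ℂ-algebra, q ∈ ℂ, and a, b ∈ A satisfying b·a = 1 + q·(a·b). Define the q-Stirling numbers S(n,k) ∈ ℂ for n ≥ 1, 1 ≤ k ≤ n by the recursion S(1,1) = 1, S(n,1) = S(n−1,1) for n ≥ 2, S(n,n) = q^{n−1} S(n−1,n−1) for n ≥ 2, and S(n,k) = [k]_q · S(n−1,k) + q^{k−1} · S(n−1,k−1) for 2 ≤ k ≤ n−1. Then for every n ≥ 1, (a·b)^n = Σ_{k=1}^n S(n,k) · a^k · b^k. -/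
open Finset

/-- q-bracket `[n]_q = 1 + q + ⋯ + q^(n-1)`. -/
noncomputable def qBracket (q : ℂ) (n : ℕ) : ℂ := ∑ j ∈ Finset.range n, q ^ j

/-- The q-Stirling numbers `S(n,k)` defined by the recursion `S(1,1) = 1`,
`S(n,1) = S(n-1,1)`, `S(n,n) = q^(n-1) S(n-1,n-1)` and
`S(n,k) = [k]_q S(n-1,k) + q^(k-1) S(n-1,k-1)` for `2 ≤ k ≤ n-1`
(with the conventions `S(0,0) = 1` and `S(n,k) = 0` for `k = 0 < n` or `k > n`,
which reproduce exactly this recursion). -/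
noncomputable def qStirling (q : ℂ) : ℕ → ℕ → ℂ
  | 0, 0 => 1
  | 0, _ + 1 => 0
  | _ + 1, 0 => 0
  | n + 1, k + 1 => qBracket q (k + 1) * qStirling q n (k + 1) + q ^ k * qStirling q n k

/-! Write `x k = a ^ k * b ^ k`. By induction on `k`, the relation `b * a = 1 + q • (a * b)` gives
`a * (b * a ^ k) = [k]_q • a ^ k + q ^ k • (a ^ (k + 1) * b)`, so left multiplication by `a * b`
sends `x k` to `[k]_q • x k + q ^ k • x (k + 1)`. Starting from `(a * b) ^ 0 = x 0`, the
coefficients of `(a * b) ^ n` in the `x k` therefore obey exactly the recursion defining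
`qStirling q n k`. -/

@[simp] lemma qBracket_zero (q : ℂ) : qBracket q 0 = 0 := by
  simp [qBracket]

lemma qBracket_succ (q : ℂ) (k : ℕ) : qBracket q (k + 1) = qBracket q k + q ^ k := by
  simp [qBracket, sum_range_succ]

namespace qStirling

variable (q : ℂ)

@[simp] lemma succ_zero (n : ℕ) : qStirling q (n + 1) 0 = 0 := rfl

lemma succ_succ (n k : ℕ) :
    qStirling q (n + 1) (k + 1) =
      qBracket q (k + 1) * qStirling q n (k + 1) + q ^ k * qStirling q n k := rfl

lemma eq_zero_of_lt {n k : ℕ} (h : n < k) : qStirling q n k = 0 := by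
  induction n generalizing k with
  | zero => obtain ⟨k, rfl⟩ := Nat.exists_eq_add_of_lt h; rfl
  | succ n ih =>
    obtain ⟨k, rfl⟩ := Nat.exists_eq_add_of_le' (Nat.one_le_of_lt h)
    rw [succ_succ, ih (by omega), ih (by omega), mul_zero, mul_zero, add_zero]

lemma sum_succ_smul {M : Type*} [AddCommMonoid M] [Module ℂ M] (n : ℕ) (x : ℕ → M) :
    ∑ k ∈ range (n + 2), qStirling q (n + 1) k • x k =
      ∑ k ∈ range (n + 1), qStirling q n k • (qBracket q k • x k + q ^ k • x (k + 1)) := by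
  have bracket_part :
      ∑ k ∈ range (n + 1), (qBracket q (k + 1) * qStirling q n (k + 1)) • x (k + 1) =
        ∑ k ∈ range (n + 1), (qBracket q k * qStirling q n k) • x k := by
    rw [sum_range_succ, eq_zero_of_lt q (Nat.lt_succ_self n), sum_range_succ' _ n]
    simp
  simp only [sum_range_succ' _ (n + 1), succ_zero, zero_smul, add_zero, succ_succ, add_smul,
    sum_add_distrib, bracket_part, smul_add, smul_smul]
  simp only [mul_comm]

end qStirling

section QCommuting

variable {A : Type*} [Semiring A] [Algebra ℂ A] {q : ℂ} {a b : A}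

lemma mul_mul_pow_of_qComm (h : b * a = 1 + q • (a * b)) (k : ℕ) :
    a * (b * a ^ k) = qBracket q k • a ^ k + q ^ k • (a ^ (k + 1) * b) := by
  induction k with
  | zero => simp
  | succ k ih =>
    calc a * (b * a ^ (k + 1)) = a * (b * a ^ k) * a := by
          rw [pow_succ, mul_assoc, mul_assoc]
      _ = qBracket q k • a ^ (k + 1) + q ^ k • (a ^ (k + 1) * (b * a)) := by
          rw [ih, add_mul, smul_mul_assoc, smul_mul_assoc, pow_succ, mul_assoc]
      _ = qBracket q (k + 1) • a ^ (k + 1) + q ^ (k + 1) • (a ^ (k + 2) * b) := by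
          rw [h, mul_add, mul_one, mul_smul_comm, ← mul_assoc, ← pow_succ, smul_add,
            smul_smul, ← pow_succ, qBracket_succ, add_smul, ← add_assoc]

lemma mul_mul_pow_mul_pow_of_qComm (h : b * a = 1 + q • (a * b)) (k : ℕ) :
    a * b * (a ^ k * b ^ k) =
      qBracket q k • (a ^ k * b ^ k) + q ^ k • (a ^ (k + 1) * b ^ (k + 1)) := by
  rw [← mul_assoc, mul_assoc a, mul_mul_pow_of_qComm h, add_mul, smul_mul_assoc, smul_mul_assoc,
    mul_assoc _ b, ← pow_succ']

lemma mul_pow_eq_sum_range_qStirling (h : b * a = 1 + q • (a * b)) (n : ℕ) :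
    (a * b) ^ n = ∑ k ∈ range (n + 1), qStirling q n k • (a ^ k * b ^ k) := by
  induction n with
  | zero => simp [qStirling]
  | succ n ih =>
    rw [qStirling.sum_succ_smul, pow_succ', ih, mul_sum]
    simp only [mul_smul_comm, mul_mul_pow_mul_pow_of_qComm h]

end QCommuting

/-- In an associative unital ℂ-algebra, if `b·a = 1 + q·(a·b)` then
`(a·b)^n = Σ_{k=1}^n S(n,k) a^k b^k` for every `n ≥ 1`. -/
theorem mul_pow_eq_sum_qStirling {A : Type*} [Ring A] [Algebra ℂ A] (q : ℂ) (a b : A)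
    (h : b * a = 1 + q • (a * b)) (n : ℕ) (hn : 1 ≤ n) :
    (a * b) ^ n = ∑ k ∈ Finset.Icc 1 n, qStirling q n k • (a ^ k * b ^ k) := by
  obtain ⟨m, rfl⟩ := Nat.exists_eq_add_of_le' hn
  rw [mul_pow_eq_sum_range_qStirling h, Nat.range_succ_eq_Icc_zero,
    ← insert_Icc_add_one_left_eq_Icc (Nat.zero_le _), sum_insert (by simp), qStirling.succ_zero,
    zero_smul, zero_add, zero_add]
end

section
/- Let q ∈ ℝ with 0 ≤ q < 1 and let z ∈ ℂ with |z| < 1/(1−q). Then the series Σ_{k=0}^∞ z^k/[k]_q! converges, the infinite product ∏_{j=0}^∞ (1 − z(1−q)q^j) converges to a nonzero complex number, and Σ_{k=0}^∞ z^k/[k]_q! = 1/∏_{j=0}^∞ (1 − z(1−q)q^j). -/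
open Finset

/-- q-factorial `[n]_q! = [1]_q [2]_q ⋯ [n]_q`, with `[0]_q! = 1`. -/
noncomputable def qFact (q : ℂ) (n : ℕ) : ℂ := ∏ i ∈ Finset.range n, qBracket q (i + 1)

open Filter Topology

lemma qBracket_mul (c : ℂ) (hc1 : c ≠ 1) (n : ℕ) :
    qBracket c n * (1 - c) = 1 - c ^ n := by
  have hc : c - 1 ≠ 0 := sub_ne_zero.mpr hc1
  rw [qBracket, geom_sum_eq hc1]
  field_simp
  ring

/-- the real Pochhammer-type product `(q;q)_k`. -/
noncomputable def qA (q : ℝ) (k : ℕ) : ℝ := ∏ i ∈ Finset.range k, (1 - q ^ (i + 1))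

lemma qA_pos {q : ℝ} (hq0 : 0 ≤ q) (hq1 : q < 1) (k : ℕ) : 0 < qA q k := by
  refine Finset.prod_pos fun i _ => ?_
  have : q ^ (i + 1) < 1 := pow_lt_one₀ hq0 hq1 (Nat.succ_ne_zero i)
  linarith

lemma qA_cast (q : ℝ) (k : ℕ) :
    ((qA q k : ℝ) : ℂ) = ∏ i ∈ Finset.range k, (1 - (q : ℂ) ^ (i + 1)) := by
  rw [qA]
  push_cast
  rfl

lemma qFact_mul {q : ℝ} (hq1 : q < 1) (k : ℕ) :
    qFact (q : ℂ) k * (1 - (q : ℂ)) ^ k = ((qA q k : ℝ) : ℂ) := by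
  have hc1 : (q : ℂ) ≠ 1 := by
    simpa using fun h => absurd h hq1.ne
  rw [qA_cast, qFact]
  rw [show ((1 : ℂ) - (q:ℂ)) ^ k = ∏ _i ∈ Finset.range k, (1 - (q:ℂ)) by
    rw [Finset.prod_const, Finset.card_range]]
  rw [← Finset.prod_mul_distrib]
  exact Finset.prod_congr rfl fun i _ => qBracket_mul _ hc1 _

lemma qA_succ (q : ℝ) (k : ℕ) : qA q (k + 1) = qA q k * (1 - q ^ (k + 1)) :=
  Finset.prod_range_succ _ _

lemma summable_aux {q r : ℝ} (hq0 : 0 ≤ q) (hq1 : q < 1) (hr0 : 0 ≤ r) (hr : r < 1) :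
    Summable (fun k : ℕ => r ^ k / qA q k) := by
  apply summable_of_ratio_norm_eventually_le (r := (1 + r) / 2) (by linarith)
  have hε : (0 : ℝ) < (1 - r) / 2 := by linarith
  have hev : ∀ᶠ k : ℕ in atTop, q ^ k < (1 - r) / 2 :=
    (tendsto_pow_atTop_nhds_zero_of_lt_one hq0 hq1).eventually (gt_mem_nhds hε)
  filter_upwards [hev] with k hk
  have hqk : q ^ (k + 1) ≤ (1 - r) / 2 :=
    le_trans (pow_le_pow_of_le_one hq0 hq1.le (Nat.le_succ k)) hk.le
  have hA := qA_pos hq0 hq1 k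
  have ht : (1 + r) / 2 ≤ 1 - q ^ (k + 1) := by linarith
  have ht0 : (0 : ℝ) < 1 - q ^ (k + 1) := by linarith
  have hA1 := qA_pos hq0 hq1 (k + 1)
  rw [Real.norm_of_nonneg (div_nonneg (pow_nonneg hr0 _) hA1.le),
    Real.norm_of_nonneg (div_nonneg (pow_nonneg hr0 _) hA.le)]
  have heq : r ^ (k + 1) / qA q (k + 1) = (r ^ k / qA q k) * (r / (1 - q ^ (k + 1))) := by
    rw [qA_succ, pow_succ, ← div_mul_div_comm]
  rw [heq]
  have hfac : r / (1 - q ^ (k + 1)) ≤ (1 + r) / 2 := by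
    rw [div_le_iff₀ ht0]
    nlinarith
  calc r ^ k / qA q k * (r / (1 - q ^ (k + 1)))
      ≤ r ^ k / qA q k * ((1 + r) / 2) := by
        exact mul_le_mul_of_nonneg_left hfac (by positivity)
    _ = (1 + r) / 2 * (r ^ k / qA q k) := by ring

lemma norm_qA_cast {q : ℝ} (hq0 : 0 ≤ q) (hq1 : q < 1) (k : ℕ) :
    ‖((qA q k : ℝ) : ℂ)‖ = qA q k := by
  rw [Complex.norm_real, Real.norm_of_nonneg (qA_pos hq0 hq1 k).le]

lemma summable_c {q : ℝ} (hq0 : 0 ≤ q) (hq1 : q < 1) {x : ℂ} (hx : ‖x‖ < 1) :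
    Summable (fun k : ℕ => x ^ k / ((qA q k : ℝ) : ℂ)) := by
  apply Summable.of_norm_bounded (g := fun k => ‖x‖ ^ k / qA q k)
    (summable_aux hq0 hq1 (norm_nonneg x) hx)
  intro k
  rw [norm_div, norm_pow, norm_qA_cast hq0 hq1]

lemma qA_cast_succ {q : ℝ} (k : ℕ) :
    ((qA q (k + 1) : ℝ) : ℂ) = ((qA q k : ℝ) : ℂ) * (1 - (q : ℂ) ^ (k + 1)) := by
  rw [qA_succ]
  push_cast
  ring

lemma funeq {q : ℝ} (hq0 : 0 ≤ q) (hq1 : q < 1) {x : ℂ} (hx : ‖x‖ < 1) :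
    ∑' k : ℕ, ((q : ℂ) * x) ^ k / ((qA q k : ℝ) : ℂ)
      = (1 - x) * ∑' k : ℕ, x ^ k / ((qA q k : ℝ) : ℂ) := by
  have hq : ‖((q : ℂ))‖ ≤ 1 := by
    rw [Complex.norm_real, Real.norm_of_nonneg hq0]; exact hq1.le
  have hx' : ‖(q : ℂ) * x‖ < 1 := by
    rw [norm_mul]
    calc ‖((q:ℂ))‖ * ‖x‖ ≤ 1 * ‖x‖ := mul_le_mul_of_nonneg_right hq (norm_nonneg x)
    _ = ‖x‖ := one_mul _
    _ < 1 := hx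
  have hS := summable_c hq0 hq1 hx
  have hT := summable_c hq0 hq1 hx'
  have hAne : ∀ k : ℕ, ((qA q k : ℝ) : ℂ) ≠ 0 := fun k => by
    exact_mod_cast (qA_pos hq0 hq1 k).ne'
  have hcne : ∀ k : ℕ, (1 : ℂ) - (q : ℂ) ^ (k + 1) ≠ 0 := fun k => by
    have h1 : q ^ (k + 1) < 1 := pow_lt_one₀ hq0 hq1 (Nat.succ_ne_zero k)
    have : ((1 - q ^ (k + 1) : ℝ) : ℂ) ≠ 0 := by exact_mod_cast (by linarith : (0:ℝ) < 1 - q^(k+1)).ne'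
    convert this using 1
    push_cast; ring
  have hsub : ∑' k : ℕ, (x ^ k / ((qA q k : ℝ) : ℂ) - ((q : ℂ) * x) ^ k / ((qA q k : ℝ) : ℂ))
      = x * ∑' k : ℕ, x ^ k / ((qA q k : ℝ) : ℂ) := by
    rw [← tsum_mul_left]
    rw [Summable.tsum_eq_zero_add (hS.sub hT)]
    simp only [pow_zero, mul_pow]
    rw [sub_self, zero_add]
    apply tsum_congr
    intro k
    rw [qA_cast_succ, ← sub_div,
      mul_comm ((qA q k : ℝ) : ℂ) (1 - (q : ℂ) ^ (k + 1)),
      show x ^ (k + 1) - (q : ℂ) ^ (k + 1) * x ^ (k + 1)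
        = (1 - (q : ℂ) ^ (k + 1)) * x ^ (k + 1) by ring,
      mul_div_mul_left _ _ (hcne k), pow_succ, mul_comm (x ^ k) x, mul_div_assoc]
  have h1 : ∑' k : ℕ, x ^ k / ((qA q k : ℝ) : ℂ)
      - ∑' k : ℕ, ((q : ℂ) * x) ^ k / ((qA q k : ℝ) : ℂ)
      = x * ∑' k : ℕ, x ^ k / ((qA q k : ℝ) : ℂ) := by
    rw [← Summable.tsum_sub hS hT]; exact hsub
  linear_combination -h1


/-- For `0 ≤ q < 1` and `|z| < 1/(1-q)`, the q-exponential series `Σ z^k/[k]_q!` converges,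
the infinite product `∏_{j=0}^∞ (1 − z(1−q)q^j)` converges to a nonzero complex number `P`,
and `Σ_{k=0}^∞ z^k/[k]_q! = 1/P`. -/
theorem qExp_eq_inv_prod (q : ℝ) (hq0 : 0 ≤ q) (hq1 : q < 1) (z : ℂ)
    (hz : ‖z‖ < 1 / (1 - q)) :
    Summable (fun k : ℕ => z ^ k / qFact (q : ℂ) k) ∧
    ∃ P : ℂ, P ≠ 0 ∧ HasProd (fun j : ℕ => 1 - z * (1 - (q : ℂ)) * (q : ℂ) ^ j) P ∧
      ∑' k : ℕ, z ^ k / qFact (q : ℂ) k = 1 / P := by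
  have h1q : (0:ℝ) < 1 - q := by linarith
  set w : ℂ := z * (1 - (q:ℂ)) with hwdef
  have hnormc : ‖((q:ℂ))‖ = q := by rw [Complex.norm_real, Real.norm_of_nonneg hq0]
  have hw : ‖w‖ < 1 := by
    have h1c : ‖(1 - (q:ℂ))‖ = 1 - q := by
      rw [show (1 : ℂ) - (q:ℂ) = ((1 - q : ℝ) : ℂ) by push_cast; ring,
        Complex.norm_real, Real.norm_of_nonneg h1q.le]
    rw [hwdef, norm_mul, h1c]
    calc ‖z‖ * (1 - q) < (1/(1-q)) * (1-q) := mul_lt_mul_of_pos_right hz h1q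
    _ = 1 := by field_simp
  have hterm : ∀ k : ℕ, z ^ k / qFact (q:ℂ) k = w ^ k / ((qA q k : ℝ) : ℂ) := by
    intro k
    have hA := qFact_mul hq1 k
    have hAne : ((qA q k : ℝ):ℂ) ≠ 0 := by exact_mod_cast (qA_pos hq0 hq1 k).ne'
    have hcne : (1 : ℂ) - (q:ℂ) ≠ 0 := by
      have h2 : ((1 - q : ℝ) : ℂ) ≠ 0 := by exact_mod_cast h1q.ne'
      convert h2 using 1; push_cast; ring
    have hfne : qFact (q:ℂ) k ≠ 0 := by
      intro h
      rw [h, zero_mul] at hA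
      exact hAne hA.symm
    rw [hwdef, mul_pow, ← hA]
    rw [div_eq_div_iff hfne (mul_ne_zero hfne (pow_ne_zero _ hcne))]
    ring
  have hsumF : Summable (fun k : ℕ => w ^ k / ((qA q k : ℝ) : ℂ)) := summable_c hq0 hq1 hw
  have hsum1 : Summable (fun k : ℕ => z ^ k / qFact (q:ℂ) k) := by
    rw [funext hterm]; exact hsumF
  refine ⟨hsum1, ?_⟩
  have hgne : ∀ j : ℕ, (1 : ℂ) - z * (1 - (q:ℂ)) * (q:ℂ)^j ≠ 0 := by
    intro j h
    have h2 : ‖w * (q:ℂ)^j‖ < 1 := by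
      rw [norm_mul, norm_pow, hnormc]
      calc ‖w‖ * q^j ≤ ‖w‖ * 1 :=
            mul_le_mul_of_nonneg_left (pow_le_one₀ hq0 hq1.le) (norm_nonneg w)
      _ = ‖w‖ := mul_one _
      _ < 1 := hw
    have h3 : w * (q:ℂ)^j = 1 := by rw [hwdef]; linear_combination -h
    rw [h3, norm_one] at h2
    exact lt_irrefl 1 h2
  have hlog : Summable (fun j : ℕ => Complex.log (1 - z * (1 - (q:ℂ)) * (q:ℂ)^j)) := by
    apply Summable.of_norm_bounded_eventually_nat (g := fun j => 3/2 * ‖w‖ * q ^ j)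
    · simpa [mul_assoc] using (summable_geometric_of_lt_one hq0 hq1).mul_left (3/2 * ‖w‖)
    · have hev : ∀ᶠ j : ℕ in atTop, q ^ j < 1/2 :=
        (tendsto_pow_atTop_nhds_zero_of_lt_one hq0 hq1).eventually
          (gt_mem_nhds (by norm_num : (0:ℝ) < 1/2))
      filter_upwards [hev] with j hj
      have hsmall : ‖-(w * (q:ℂ)^j)‖ ≤ 1/2 := by
        rw [norm_neg, norm_mul, norm_pow, hnormc]
        calc ‖w‖ * q^j ≤ 1 * q^j :=
              mul_le_mul_of_nonneg_right hw.le (pow_nonneg hq0 j)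
        _ = q^j := one_mul _
        _ ≤ 1/2 := hj.le
      have := Complex.norm_log_one_add_half_le_self hsmall
      rw [show (1 : ℂ) + -(w * (q:ℂ)^j) = 1 - z * (1 - (q:ℂ)) * (q:ℂ)^j by rw [hwdef]; ring] at this
      calc ‖Complex.log (1 - z * (1 - (q:ℂ)) * (q:ℂ)^j)‖ ≤ 3/2 * ‖-(w * (q:ℂ)^j)‖ := this
      _ = 3/2 * (‖w‖ * q^j) := by rw [norm_neg, norm_mul, norm_pow, hnormc]
      _ = 3/2 * ‖w‖ * q^j := by ring
  set P : ℂ := Complex.exp (∑' j : ℕ, Complex.log (1 - z * (1 - (q:ℂ)) * (q:ℂ)^j)) with hPdef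
  have hProd : HasProd (fun j : ℕ => 1 - z * (1 - (q:ℂ)) * (q:ℂ)^j) P := by
    have h := hlog.hasSum.cexp
    have heq : (Complex.exp ∘ fun j : ℕ => Complex.log (1 - z * (1 - (q:ℂ)) * (q:ℂ)^j))
        = fun j : ℕ => 1 - z * (1 - (q:ℂ)) * (q:ℂ)^j := by
      funext j
      exact Complex.exp_log (hgne j)
    rwa [heq] at h
  have hkey : ∀ n : ℕ, ∑' k : ℕ, ((q:ℂ)^n * w) ^ k / ((qA q k : ℝ):ℂ)
      = (∏ j ∈ Finset.range n, (1 - z * (1 - (q:ℂ)) * (q:ℂ)^j))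
        * ∑' k : ℕ, w ^ k / ((qA q k : ℝ):ℂ) := by
    intro n
    induction n with
    | zero => simp
    | succ n ih =>
      have hxn : ‖(q:ℂ)^n * w‖ < 1 := by
        rw [norm_mul, norm_pow, hnormc]
        calc q^n * ‖w‖ ≤ 1 * ‖w‖ :=
              mul_le_mul_of_nonneg_right (pow_le_one₀ hq0 hq1.le) (norm_nonneg w)
        _ = ‖w‖ := one_mul _
        _ < 1 := hw
      calc ∑' k : ℕ, ((q:ℂ)^(n+1) * w) ^ k / ((qA q k : ℝ):ℂ)
          = ∑' k : ℕ, ((q:ℂ) * ((q:ℂ)^n * w)) ^ k / ((qA q k : ℝ):ℂ) := by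
            rw [show ((q:ℂ)^(n+1) * w) = (q:ℂ) * ((q:ℂ)^n * w) by ring]
        _ = (1 - (q:ℂ)^n * w) * ∑' k : ℕ, ((q:ℂ)^n * w) ^ k / ((qA q k : ℝ):ℂ) :=
            funeq hq0 hq1 hxn
        _ = (∏ j ∈ Finset.range (n+1), (1 - z * (1 - (q:ℂ)) * (q:ℂ)^j))
            * ∑' k : ℕ, w ^ k / ((qA q k : ℝ):ℂ) := by
            rw [ih, Finset.prod_range_succ, hwdef]; ring
  have hlim1 : Tendsto (fun n : ℕ => ∑' k : ℕ, ((q:ℂ)^n * w) ^ k / ((qA q k:ℝ):ℂ))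
      atTop (𝓝 1) := by
    have h := tendsto_tsum_of_dominated_convergence
      (f := fun (n : ℕ) (k : ℕ) => ((q:ℂ)^n * w)^k / ((qA q k:ℝ):ℂ))
      (g := fun k : ℕ => if k = 0 then (1:ℂ) else 0)
      (bound := fun k : ℕ => ‖w‖^k / qA q k) (𝓕 := (atTop : Filter ℕ))
      (summable_aux hq0 hq1 (norm_nonneg w) hw) ?_ ?_
    · rwa [tsum_ite_eq] at h
    · intro k
      rcases k with _ | m
      · simpa [qA] using (tendsto_const_nhds : Tendsto (fun _ : ℕ => (1:ℂ)) atTop (𝓝 1))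
      · have heq : ∀ n : ℕ, ((q:ℂ)^n * w)^(m+1) / ((qA q (m+1):ℝ):ℂ)
            = ((q:ℂ)^(m+1))^n * (w^(m+1) / ((qA q (m+1):ℝ):ℂ)) := by
          intro n
          rw [mul_pow, ← pow_mul, ← pow_mul, Nat.mul_comm]
          ring
        rw [funext heq]
        have hlt : ‖(q:ℂ)^(m+1)‖ < 1 := by
          rw [norm_pow, hnormc]
          exact pow_lt_one₀ hq0 hq1 (Nat.succ_ne_zero m)
        simpa using (tendsto_pow_atTop_nhds_zero_of_norm_lt_one hlt).mul_const
          (w^(m+1) / ((qA q (m+1):ℝ):ℂ))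
    · apply Eventually.of_forall
      intro n k
      rw [norm_div, norm_pow, norm_qA_cast hq0 hq1, norm_mul, norm_pow, hnormc,
        div_le_div_iff_of_pos_right (qA_pos hq0 hq1 k)]
      have hbase : q^n * ‖w‖ ≤ ‖w‖ := by
        calc q^n * ‖w‖ ≤ 1 * ‖w‖ :=
              mul_le_mul_of_nonneg_right (pow_le_one₀ hq0 hq1.le) (norm_nonneg w)
        _ = ‖w‖ := one_mul _
      exact pow_le_pow_left₀ (mul_nonneg (pow_nonneg hq0 n) (norm_nonneg w)) hbase k
  simp only [hkey] at hlim1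
  have hlim2 : Tendsto (fun n : ℕ => (∏ j ∈ Finset.range n, (1 - z * (1 - (q:ℂ)) * (q:ℂ)^j))
      * ∑' k : ℕ, w ^ k / ((qA q k : ℝ):ℂ)) atTop
      (𝓝 (P * ∑' k : ℕ, w ^ k / ((qA q k : ℝ):ℂ))) :=
    hProd.tendsto_prod_nat.mul_const _
  have hmain : P * (∑' k : ℕ, w ^ k / ((qA q k : ℝ):ℂ)) = 1 := tendsto_nhds_unique hlim2 hlim1
  refine ⟨P, Complex.exp_ne_zero _, hProd, ?_⟩
  rw [tsum_congr hterm]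
  exact eq_one_div_of_mul_eq_one_left (by rw [mul_comm] at hmain; exact hmain)
end

section
/- Let q ∈ ℝ with 0 < q < 1, let x ∈ ℝ with x > 0, and let f₁, f₂ : ℝ → ℝ be functions bounded on the set {q^{k+1}/(1−q) : k ∈ ℕ}. Define M_q f(x) = Σ_{k=0}^∞ q^k · (q^k/(1−q))^{x−1} · f(q^{k+1}/(1−q)) (an absolutely convergent series). Then M_q(f₁)(x) · M_q(f₂)(x) = (1/(1−q))^{x−1} · Σ_{m=0}^∞ q^m · (q^m/(1−q))^{x−1} · (Σ_{k=0}^m f₁(q^{k+1}/(1−q)) · f₂(q^{m+1−k}/(1−q))), the series on the right converging absolutely. -/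
open Finset

/-! The weight of the Jackson sum factors as `q ^ k * (q ^ k / (1 - q)) ^ (x - 1) =
(1 / (1 - q)) ^ (x - 1) * (q ^ x) ^ k`, so `M_q f(x)` is a constant times a power series in
`r = q ^ x < 1` with bounded coefficients. Such series converge absolutely, and the identity is
their Cauchy product; the convolution term of order `m` is at most `(m + 1) C₁ C₂`, which is still
summable against `r ^ m`. -/

lemma pow_mul_pow_div_one_sub_rpow {q : ℝ} (hq0 : 0 < q) (hq1 : q ≤ 1) (x : ℝ) (k : ℕ) :
    q ^ k * (q ^ k / (1 - q)) ^ (x - 1) = (1 / (1 - q)) ^ (x - 1) * (q ^ x) ^ k := by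
  have h1q : 0 ≤ 1 - q := by linarith
  have hqx : q * q ^ (x - 1) = q ^ x := by
    rw [mul_comm, ← Real.rpow_add_one hq0.ne', sub_add_cancel]
  rw [div_eq_mul_one_div, Real.mul_rpow (by positivity) (by positivity),
    ← Real.rpow_pow_comm hq0.le, ← mul_assoc, ← mul_pow, hqx, mul_comm]

lemma summable_pow_mul_abs_of_abs_le {r C : ℝ} (hr0 : 0 ≤ r) (hr1 : r < 1) {a : ℕ → ℝ}
    (ha : ∀ k, |a k| ≤ C) : Summable fun k => r ^ k * |a k| :=
  ((summable_geometric_of_lt_one hr0 hr1).mul_right C).of_nonneg_of_le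
    (fun k => by positivity) fun k => mul_le_mul_of_nonneg_left (ha k) (by positivity)

lemma abs_sum_range_mul_sub_le {a b : ℕ → ℝ} {C₁ C₂ : ℝ} (ha : ∀ k, |a k| ≤ C₁)
    (hb : ∀ k, |b k| ≤ C₂) (m : ℕ) :
    |∑ k ∈ range (m + 1), a k * b (m - k)| ≤ (m + 1) * (C₁ * C₂) := by
  have hC₁ : 0 ≤ C₁ := (abs_nonneg _).trans (ha 0)
  calc |∑ k ∈ range (m + 1), a k * b (m - k)|
      ≤ ∑ k ∈ range (m + 1), |a k * b (m - k)| := abs_sum_le_sum_abs _ _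
    _ ≤ ∑ _k ∈ range (m + 1), C₁ * C₂ := sum_le_sum fun k _ => by
      rw [abs_mul]; exact mul_le_mul (ha k) (hb _) (abs_nonneg _) hC₁
    _ = (m + 1) * (C₁ * C₂) := by simp

lemma summable_pow_mul_abs_sum_range_mul_sub {r C₁ C₂ : ℝ} (hr0 : 0 ≤ r) (hr1 : r < 1)
    {a b : ℕ → ℝ} (ha : ∀ k, |a k| ≤ C₁) (hb : ∀ k, |b k| ≤ C₂) :
    Summable fun m => r ^ m * |∑ k ∈ range (m + 1), a k * b (m - k)| := by
  have hr : ‖r‖ < 1 := by rwa [Real.norm_of_nonneg hr0]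
  have hlin : Summable fun m : ℕ => ((m : ℝ) + 1) * r ^ m := by
    simpa [add_mul] using (summable_pow_mul_geometric_of_norm_lt_one 1 hr).add
      (summable_geometric_of_lt_one hr0 hr1)
  refine (hlin.mul_right (C₁ * C₂)).of_nonneg_of_le (fun m => by positivity) fun m => ?_
  calc r ^ m * |∑ k ∈ range (m + 1), a k * b (m - k)|
      ≤ r ^ m * ((m + 1) * (C₁ * C₂)) :=
        mul_le_mul_of_nonneg_left (abs_sum_range_mul_sub_le ha hb m) (by positivity)
    _ = (m + 1) * r ^ m * (C₁ * C₂) := by ring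

lemma tsum_pow_mul_mul_tsum_pow_mul {r C₁ C₂ : ℝ} (hr0 : 0 ≤ r) (hr1 : r < 1)
    {a b : ℕ → ℝ} (ha : ∀ k, |a k| ≤ C₁) (hb : ∀ k, |b k| ≤ C₂) :
    (∑' k, r ^ k * a k) * (∑' k, r ^ k * b k) =
      ∑' m, r ^ m * ∑ k ∈ range (m + 1), a k * b (m - k) := by
  have hnorm {c : ℕ → ℝ} {C : ℝ} (hc : ∀ k, |c k| ≤ C) : Summable fun k => ‖r ^ k * c k‖ := by
    simpa [abs_mul, abs_of_nonneg hr0] using summable_pow_mul_abs_of_abs_le hr0 hr1 hc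
  rw [tsum_mul_tsum_eq_tsum_sum_range_of_summable_norm (hnorm ha) (hnorm hb)]
  refine tsum_congr fun m => ?_
  rw [mul_sum]
  refine sum_congr rfl fun k hk => ?_
  rw [← pow_mul_pow_sub r (mem_range_succ_iff.mp hk)]
  ring

/-- For `0 < q < 1`, bounded `f₁, f₂` on `{q^(k+1)/(1−q) : k ∈ ℕ}` and `x > 0`, the
q-integral transform `M_q f(x) = Σ_k q^k (q^k/(1−q))^(x−1) f(q^(k+1)/(1−q))` (an absolutely
convergent series) satisfies the convolution formula
`M_q(f₁)(x) M_q(f₂)(x) = (1/(1−q))^(x−1) Σ_m q^m (q^m/(1−q))^(x−1) (f₁ ∘ f₂)(q·q^m/(1−q))`,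
where `(f₁ ∘ f₂)(q·q^m/(1−q)) = Σ_{k=0}^m f₁(q^(k+1)/(1−q)) f₂(q^(m+1−k)/(1−q))`,
the right-hand series converging absolutely. -/
theorem qIntegralTransform_convolution (q : ℝ) (hq0 : 0 < q) (hq1 : q < 1)
    (x : ℝ) (hx : 0 < x) (f₁ f₂ : ℝ → ℝ)
    (hb₁ : ∃ C : ℝ, ∀ k : ℕ, |f₁ (q ^ (k + 1) / (1 - q))| ≤ C)
    (hb₂ : ∃ C : ℝ, ∀ k : ℕ, |f₂ (q ^ (k + 1) / (1 - q))| ≤ C) :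
    Summable (fun k : ℕ =>
      q ^ k * (q ^ k / (1 - q)) ^ (x - 1) * |f₁ (q ^ (k + 1) / (1 - q))|) ∧
    Summable (fun k : ℕ =>
      q ^ k * (q ^ k / (1 - q)) ^ (x - 1) * |f₂ (q ^ (k + 1) / (1 - q))|) ∧
    Summable (fun m : ℕ => q ^ m * (q ^ m / (1 - q)) ^ (x - 1) *
      |∑ k ∈ Finset.range (m + 1),
        f₁ (q ^ (k + 1) / (1 - q)) * f₂ (q ^ (m + 1 - k) / (1 - q))|) ∧
    (∑' k : ℕ, q ^ k * (q ^ k / (1 - q)) ^ (x - 1) * f₁ (q ^ (k + 1) / (1 - q))) *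
      (∑' k : ℕ, q ^ k * (q ^ k / (1 - q)) ^ (x - 1) * f₂ (q ^ (k + 1) / (1 - q)))
      = (1 / (1 - q)) ^ (x - 1) *
        ∑' m : ℕ, q ^ m * (q ^ m / (1 - q)) ^ (x - 1) *
          ∑ k ∈ Finset.range (m + 1),
            f₁ (q ^ (k + 1) / (1 - q)) * f₂ (q ^ (m + 1 - k) / (1 - q)) := by
  obtain ⟨C₁, hC₁⟩ := hb₁
  obtain ⟨C₂, hC₂⟩ := hb₂
  have hr0 : 0 ≤ q ^ x := by positivity
  have hr1 : q ^ x < 1 := Real.rpow_lt_one hq0.le hq1 hx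
  have hconv (m : ℕ) :
      ∑ k ∈ range (m + 1), f₁ (q ^ (k + 1) / (1 - q)) * f₂ (q ^ (m + 1 - k) / (1 - q)) =
        ∑ k ∈ range (m + 1), f₁ (q ^ (k + 1) / (1 - q)) * f₂ (q ^ (m - k + 1) / (1 - q)) :=
    sum_congr rfl fun k hk => by rw [Nat.sub_add_comm (mem_range_succ_iff.mp hk)]
  simp only [hconv, pow_mul_pow_div_one_sub_rpow hq0 hq1.le, mul_assoc]
  refine ⟨(summable_pow_mul_abs_of_abs_le hr0 hr1 hC₁).mul_left _,
    (summable_pow_mul_abs_of_abs_le hr0 hr1 hC₂).mul_left _,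
    (summable_pow_mul_abs_sum_range_mul_sub hr0 hr1 hC₁ hC₂).mul_left _, ?_⟩
  rw [tsum_mul_left, tsum_mul_left, tsum_mul_left,
    ← tsum_pow_mul_mul_tsum_pow_mul hr0 hr1 hC₁ hC₂]
  ring
end

section
/- Let H and K be complex Hilbert spaces, and let R : H → H, B : K → H, C : H → ℂ, D : K → ℂ be bounded linear maps such that the block operator [[R, B], [C, D]] from H ⊕ K to H ⊕ ℂ is a coisometry, i.e. R R* + B B* = id_H, R C* + B D* = 0, and C C* + D D* = 1 (identifying maps ℂ → ℂ with scalars). Then ‖R‖ ≤ 1, and for all z, w ∈ ℂ with |z| < 1 and |w| < 1, defining the scalar-valued S(z) = D + z · C ∘ (id_H − z R)^{-1} ∘ B : K → ℂ, one has 1 − S(z) ∘ S(w)* = (1 − z·conj(w)) · C ∘ (id_H − z R)^{-1} ∘ ((id_H − conj(w) R*)^{-1}) ∘ C*, as an equality of maps ℂ → ℂ (equivalently of scalars). -/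
open ContinuousLinearMap

lemma aux_ring {A : Type*} [Ring A] [Algebra ℂ A] (r s p q : A) (z w : ℂ)
    (hp : p * (1 - z • r) = 1) (hq : (1 - w • s) * q = 1) :
    1 + w • (s * q) + z • (p * r) - (z * w) • (p * (1 - r * s) * q)
      = (1 - z * w) • (p * q) := by
  have h1 : z • (p * r) = p - 1 := by
    calc z • (p * r) = p * 1 - p * (1 - z • r) := by noncomm_ring
      _ = p - 1 := by rw [hp, mul_one]
  have h2 : w • (s * q) = q - 1 := by
    calc w • (s * q) = 1 * q - (1 - w • s) * q := by noncomm_ring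
      _ = q - 1 := by rw [hq, one_mul]
  have h3 : (z * w) • (p * (r * s) * q) = (p - 1) * (q - 1) := by
    calc (z * w) • (p * (r * s) * q) = (z • (p * r)) * (w • (s * q)) := by
          rw [smul_mul_smul_comm]; congr 1; noncomm_ring
      _ = (p - 1) * (q - 1) := by rw [h1, h2]
  have expand : (z * w) • (p * (1 - r * s) * q)
      = (z * w) • (p * q) - (p - 1) * (q - 1) := by
    rw [← h3, ← smul_sub]; congr 1; noncomm_ring
  rw [expand, h1, h2, sub_smul, one_smul]
  noncomm_ring

set_option maxHeartbeats 1600000 in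
/-- Characteristic function of a coisometric block operator matrix `[[R, B], [C, D]]`
from `H ⊕ K` to `H ⊕ ℂ`: if `R R* + B B* = id_H`, `R C* + B D* = 0` and `C C* + D D* = 1`,
then `‖R‖ ≤ 1`, for `|z| < 1, |w| < 1` the operators `id − zR` and `id − conj(w) R*` are
invertible, and with `S(z) = D + z C (id − zR)⁻¹ B` one has
`1 − S(z) S(w)* = (1 − z conj(w)) · C (id − zR)⁻¹ (id − conj(w) R*)⁻¹ C*`. -/
theorem characteristic_function_kernel
    {H K : Type*} [NormedAddCommGroup H] [InnerProductSpace ℂ H] [CompleteSpace H]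
    [NormedAddCommGroup K] [InnerProductSpace ℂ K] [CompleteSpace K]
    (R : H →L[ℂ] H) (B : K →L[ℂ] H) (C : H →L[ℂ] ℂ) (D : K →L[ℂ] ℂ)
    (h1 : R ∘L adjoint R + B ∘L adjoint B = ContinuousLinearMap.id ℂ H)
    (h2 : R ∘L adjoint C + B ∘L adjoint D = 0)
    (h3 : C ∘L adjoint C + D ∘L adjoint D = ContinuousLinearMap.id ℂ ℂ) :
    ‖R‖ ≤ 1 ∧
    ∀ z w : ℂ, ‖z‖ < 1 → ‖w‖ < 1 →
      IsUnit ((1 : H →L[ℂ] H) - z • R) ∧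
      IsUnit ((1 : H →L[ℂ] H) - (starRingEnd ℂ) w • adjoint R) ∧
      (1 : ℂ →L[ℂ] ℂ) -
          (D + z • (C ∘L Ring.inverse ((1 : H →L[ℂ] H) - z • R) ∘L B)) ∘L
            adjoint (D + w • (C ∘L Ring.inverse ((1 : H →L[ℂ] H) - w • R) ∘L B))
        = (1 - z * (starRingEnd ℂ) w) •
            (C ∘L Ring.inverse ((1 : H →L[ℂ] H) - z • R) ∘L
              Ring.inverse ((1 : H →L[ℂ] H) - (starRingEnd ℂ) w • adjoint R) ∘L
                adjoint C) := by
  -- norm bound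
  have hle : ∀ x : H, ‖adjoint R x‖ ≤ ‖x‖ := by
    intro x
    have h := congrArg (fun T : H →L[ℂ] H => RCLike.re (inner ℂ (T x) x : ℂ)) h1
    simp only [add_apply, comp_apply, coe_id', id_eq, inner_add_left, map_add] at h
    rw [← adjoint_inner_right R (adjoint R x) x, ← adjoint_inner_right B (adjoint B x) x,
      inner_self_eq_norm_sq, inner_self_eq_norm_sq, inner_self_eq_norm_sq] at h
    nlinarith [norm_nonneg (adjoint R x), norm_nonneg x, norm_nonneg (adjoint B x)]
  have hadjR : ‖adjoint R‖ ≤ 1 :=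
    opNorm_le_bound _ zero_le_one fun x => by simpa using hle x
  have hR : ‖R‖ ≤ 1 := by
    rw [← (adjoint (𝕜 := ℂ) (E := H) (F := H)).norm_map R] at *
    exact hadjR
  refine ⟨hR, fun z w hz hw => ?_⟩
  have hzR : ‖z • R‖ < 1 :=
    lt_of_le_of_lt (by rw [norm_smul]; exact mul_le_of_le_one_right (norm_nonneg z) hR) hz
  have hwR : ‖(starRingEnd ℂ) w • adjoint R‖ < 1 := by
    rw [norm_smul, RCLike.norm_conj, (adjoint (𝕜 := ℂ) (E := H) (F := H)).norm_map R]
    exact lt_of_le_of_lt (mul_le_of_le_one_right (norm_nonneg w) hR) hw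
  have hu1 : IsUnit ((1 : H →L[ℂ] H) - z • R) := ⟨Units.oneSub _ hzR, Units.val_oneSub _ _⟩
  have hu2 : IsUnit ((1 : H →L[ℂ] H) - (starRingEnd ℂ) w • adjoint R) :=
    ⟨Units.oneSub _ hwR, Units.val_oneSub _ _⟩
  refine ⟨hu1, hu2, ?_⟩
  set p := Ring.inverse ((1 : H →L[ℂ] H) - z • R) with hpdef
  set pw := Ring.inverse ((1 : H →L[ℂ] H) - w • R) with hpwdef
  set q := Ring.inverse ((1 : H →L[ℂ] H) - (starRingEnd ℂ) w • adjoint R) with hqdef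
  have hp : p * ((1 : H →L[ℂ] H) - z • R) = 1 := Ring.inverse_mul_cancel _ hu1
  have hq : ((1 : H →L[ℂ] H) - (starRingEnd ℂ) w • adjoint R) * q = 1 :=
    Ring.mul_inverse_cancel _ hu2
  have hadjpw : adjoint pw = q := by
    have hstar : star ((1 : H →L[ℂ] H) - w • R)
        = (1 : H →L[ℂ] H) - (starRingEnd ℂ) w • adjoint R := by
      rw [star_sub, star_one, star_smul, star_eq_adjoint, starRingEnd_apply]
    rw [hpwdef, hqdef, ← star_eq_adjoint, ← hstar, Ring.inverse_star]
  -- adjoint of S(w)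
  have hSw : adjoint (D + w • (C ∘L pw ∘L B))
      = adjoint D + (starRingEnd ℂ) w • (adjoint B ∘L (q ∘L adjoint C)) := by
    rw [map_add, map_smulₛₗ, adjoint_comp, adjoint_comp, hadjpw, comp_assoc]
  -- block relations
  have hDD : D ∘L adjoint D = 1 - C ∘L adjoint C := by
    rw [one_def]; exact eq_sub_of_add_eq' h3
  have hBB : B ∘L adjoint B = 1 - R ∘L adjoint R := by
    rw [one_def]; exact eq_sub_of_add_eq' h1
  have hBD : B ∘L adjoint D = -(R ∘L adjoint C) := eq_neg_of_add_eq_zero_right h2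
  have hDB : D ∘L adjoint B = -(C ∘L adjoint R) := by
    have := congrArg (adjoint (𝕜 := ℂ)) hBD
    simpa [adjoint_comp, adjoint_adjoint] using this
  -- expand the product
  have expand : (D + z • (C ∘L p ∘L B)) ∘L
        (adjoint D + (starRingEnd ℂ) w • (adjoint B ∘L (q ∘L adjoint C)))
      = D ∘L adjoint D
        + (starRingEnd ℂ) w • ((D ∘L adjoint B) ∘L (q ∘L adjoint C))
        + z • ((C ∘L p) ∘L (B ∘L adjoint D))
        + (z * (starRingEnd ℂ) w) • ((C ∘L p) ∘L ((B ∘L adjoint B) ∘L (q ∘L adjoint C))) := by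
    ext
    simp only [add_apply, comp_apply, smul_apply, map_add, map_smul, mul_smul, smul_eq_mul]
    ring
  rw [hSw, expand, hDD, hBB, hBD, hDB]
  -- the key algebraic identity
  have key := aux_ring R (adjoint R) p q z ((starRingEnd ℂ) w) hp hq
  have k := congrArg (fun T : H →L[ℂ] H => C ∘L (T ∘L adjoint C)) key
  ext
  have kx := congrArg (fun T : ℂ →L[ℂ] ℂ => T 1) k
  simp only [comp_apply, add_apply, sub_apply, smul_apply, mul_apply, ContinuousLinearMap.one_apply,
    map_add, map_sub, map_smul, neg_apply, map_neg, mul_def, smul_eq_mul] at kx ⊢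
  linear_combination kx
end
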